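/- arXiv:2305.01428 — 4 statements merged into one kernel-verified Lean document; each statement's English description precedes it below -/
import Mathlib

section
/- The Stieltjes transform m_sc(z) = ∫_{-2}^{2} ρ_sc(x)/(x - z) dx of the semicircle density ρ_sc(x) = √(4 - x²)/(2π) satisfies the self-consistent equation 1 + z·m_sc(z) + m_sc(z)² = 0 for all z in the upper half-plane. -/
/-!
Substituting `x = 2 cos θ` gives `2π m = (4 - z²) J - π z` with `J = ∫₀^π dθ / (2 cos θ - z)`.
If `a² = (2 + z) / (2 - z)`, the Weierstrass substitution `t = tan (θ / 2)` factors
`2 cos θ - z` as a multiple of `(1 + a t)(1 - a t)`, so on `[0, π/2]` the integrand has the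
antiderivative `log ((1 + a t) / (1 - a t)) / ((2 - z) a)`. Reflecting `θ ↦ π - θ` replaces
`(z, a)` by `(-z, a⁻¹)` on `[π/2, π]`, whence `(2 - z) a J = log Q - log (-Q) = ±π i` for the
non-real `Q = (1 + a) / (1 - a)`. Squaring removes both sign ambiguities: `(4 - z²) J² = -π²`.
Eliminating `J` gives the equation.
-/

open Real intervalIntegral Set

-- `θ ↦ r cos θ` is antitone on `[0, π]`, so no regularity of `g` is needed.
theorem integral_neg_self_eq_integral_comp_cos {E : Type*} [NormedAddCommGroup E]
    [NormedSpace ℝ E] [CompleteSpace E] {r : ℝ} (hr : 0 ≤ r) (g : ℝ → E) :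
    ∫ x in -r..r, g x = ∫ θ in 0..π, (r * sin θ) • g (r * cos θ) := by
  have hderiv : ∀ θ ∈ Ioo (min 0 π) (max 0 π), -(r * sin θ) ≤ 0 := fun θ hθ => by
    rw [min_eq_left pi_pos.le, max_eq_right pi_pos.le] at hθ
    exact neg_nonpos.2 (mul_nonneg hr (sin_nonneg_of_nonneg_of_le_pi hθ.1.le hθ.2.le))
  have h := integral_deriv_smul_comp_of_deriv_nonpos (g := g) (f := fun θ => r * cos θ)
    (by fun_prop) (fun θ _ => by simpa using (hasDerivAt_cos θ).const_mul r) hderiv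
  simp only [cos_zero, cos_pi, mul_one, mul_neg_one, Function.comp_def, neg_smul,
    integral_neg] at h
  rw [integral_symm, ← h, neg_neg]

theorem sqrt_four_sub_sq_two_cos {θ : ℝ} (h0 : 0 ≤ θ) (hπ : θ ≤ π) :
    √(max (4 - (2 * cos θ) ^ 2) 0) = 2 * sin θ := by
  have hsq : 4 - (2 * cos θ) ^ 2 = (2 * sin θ) ^ 2 := by nlinarith [sin_sq_add_cos_sq θ]
  rw [hsq, max_eq_left (sq_nonneg _), sqrt_sq (by linarith [sin_nonneg_of_nonneg_of_le_pi h0 hπ])]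

theorem integral_two_cos_add (z : ℂ) : ∫ θ in (0 : ℝ)..π, (2 * (cos θ : ℂ) + z) = π * z := by
  rw [integral_add (Continuous.intervalIntegrable (by fun_prop) _ _) intervalIntegrable_const,
    integral_const_mul, intervalIntegral.integral_ofReal, integral_cos]
  simp

theorem two_pi_mul_integral_semicircle_div_sub {z : ℂ} (hz : z.im ≠ 0) :
    2 * π * ∫ x in (-2 : ℝ)..2, ((√(max (4 - x ^ 2) 0) / (2 * π) : ℝ) : ℂ) / (x - z)
      = (4 - z ^ 2) * (∫ θ in (0 : ℝ)..π, (2 * (cos θ : ℂ) - z)⁻¹) - π * z := by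
  have hden : ∀ θ : ℝ, 2 * (cos θ : ℂ) - z ≠ 0 :=
    fun θ h => hz (by simpa using congrArg Complex.im h)
  have hpoint : ∀ θ ∈ uIcc 0 π,
      (2 * sin θ) • (((√(max (4 - (2 * cos θ) ^ 2) 0) / (2 * π) : ℝ) : ℂ)
        / ((2 * cos θ : ℝ) - z))
        = (2 * π : ℂ)⁻¹ * ((4 - z ^ 2) * (2 * (cos θ : ℂ) - z)⁻¹ - (2 * cos θ + z)) := by
    intro θ hθ
    rw [uIcc_of_le pi_pos.le] at hθ
    have hpyth : (sin θ : ℂ) ^ 2 + (cos θ : ℂ) ^ 2 = 1 := by exact_mod_cast sin_sq_add_cos_sq θ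
    have hθz := hden θ
    rw [sqrt_four_sub_sq_two_cos hθ.1 hθ.2, Complex.real_smul]
    push_cast at hpyth hθz ⊢
    field_simp
    linear_combination 4 * hpyth
  have hint : IntervalIntegrable (fun θ : ℝ => (4 - z ^ 2) * (2 * (cos θ : ℂ) - z)⁻¹)
      MeasureTheory.volume 0 π :=
    (continuous_const.mul (Continuous.inv₀ (by fun_prop) hden)).intervalIntegrable _ _
  rw [integral_neg_self_eq_integral_comp_cos zero_le_two, integral_congr hpoint,
    integral_const_mul, integral_sub hint (Continuous.intervalIntegrable (by fun_prop) _ _),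
    integral_const_mul, integral_two_cos_add]
  field_simp

theorem im_add_div_sub_ne_zero {r : ℝ} (hr : r ≠ 0) {β : ℂ} (hβ : β.im ≠ 0) :
    ((r + β) / (r - β)).im ≠ 0 := by
  have hden : (r : ℂ) - β ≠ 0 := fun h => hβ (by simpa using congrArg Complex.im h)
  have him : ((r + β) / (r - β)).im = 2 * r * β.im / Complex.normSq (r - β) := by
    simp only [Complex.div_im, Complex.add_im, Complex.add_re, Complex.sub_im, Complex.sub_re,
      Complex.ofReal_re, Complex.ofReal_im]
    ring
  rw [him]
  exact div_ne_zero (by positivity) (Complex.normSq_pos.2 hden).ne'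

theorem one_add_mul_ofReal_ne_zero {a : ℂ} (ha : a.im ≠ 0) (t : ℝ) : 1 + a * t ≠ 0 := by
  intro h
  have ht : t = 0 := by simpa [ha] using congrArg Complex.im h
  simp [ht] at h

theorem one_sub_mul_ofReal_ne_zero {a : ℂ} (ha : a.im ≠ 0) (t : ℝ) : 1 - a * t ≠ 0 := by
  simpa [sub_eq_add_neg] using one_add_mul_ofReal_ne_zero (a := -a) (by simpa using ha) t

theorem sq_log_sub_log_neg {Q : ℂ} (hQ : Q.im ≠ 0) :
    (Complex.log Q - Complex.log (-Q)) ^ 2 = -π ^ 2 := by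
  have hre : (Complex.log Q - Complex.log (-Q)).re = 0 := by simp [Complex.log_re]
  have him : (Complex.log Q - Complex.log (-Q)).im ^ 2 = π ^ 2 := by
    rcases hQ.lt_or_gt with h | h
    · simp [Complex.log_im, Complex.arg_neg_eq_arg_add_pi_of_im_neg h]
    · simp [Complex.log_im, Complex.arg_neg_eq_arg_sub_pi_of_im_pos h]
  set w := Complex.log Q - Complex.log (-Q)
  have him' : (w.im : ℂ) ^ 2 = (π : ℂ) ^ 2 := by exact_mod_cast him
  rw [← Complex.re_add_im w, hre, Complex.ofReal_zero, zero_add]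
  linear_combination (w.im : ℂ) ^ 2 * Complex.I_sq - him'

theorem cos_half_pos {θ : ℝ} (hθ : θ ∈ Ioo (-π) π) : 0 < cos (θ / 2) :=
  cos_pos_of_mem_Ioo ⟨by linarith [hθ.1], by linarith [hθ.2]⟩

theorem two_sub_ne_zero_of_mul_self_mul_eq {a c : ℂ} (hac : a * a * (2 - c) = 2 + c) :
    (2 : ℂ) - c ≠ 0 := by
  intro h
  have : (4 : ℂ) = 0 := by linear_combination (a * a + 1) * h - hac
  norm_num at this

theorem two_cos_sub_eq_mul {a c : ℂ} (hac : a * a * (2 - c) = 2 + c) {θ : ℝ}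
    (hθ : cos (θ / 2) ≠ 0) :
    2 * (cos θ : ℂ) - c
      = (2 - c) * (cos (θ / 2) : ℂ) ^ 2 * (1 + a * tan (θ / 2)) * (1 - a * tan (θ / 2)) := by
  have hcos : (cos θ : ℂ) = 2 * (cos (θ / 2) : ℂ) ^ 2 - 1 := by
    have h := cos_sq (θ / 2)
    rw [mul_div_cancel₀ θ two_ne_zero] at h
    exact_mod_cast (by linarith : cos θ = 2 * cos (θ / 2) ^ 2 - 1)
  have htan : (tan (θ / 2) : ℂ) * cos (θ / 2) = sin (θ / 2) := by
    exact_mod_cast tan_mul_cos hθ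
  have hpyth : (sin (θ / 2) : ℂ) ^ 2 + (cos (θ / 2) : ℂ) ^ 2 = 1 := by
    exact_mod_cast sin_sq_add_cos_sq (θ / 2)
  rw [hcos]
  linear_combination ((tan (θ / 2) : ℂ) ^ 2 * (cos (θ / 2) : ℂ) ^ 2) * hac
    + (2 + c) * (((tan (θ / 2) : ℂ) * cos (θ / 2) + sin (θ / 2)) * htan + hpyth)

theorem two_cos_sub_ne_zero {a c : ℂ} (ha : a.im ≠ 0) (hac : a * a * (2 - c) = 2 + c) {θ : ℝ}
    (hθ : θ ∈ Ioo (-π) π) : 2 * (cos θ : ℂ) - c ≠ 0 := by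
  have hcos : (cos (θ / 2) : ℂ) ≠ 0 := by exact_mod_cast (cos_half_pos hθ).ne'
  rw [two_cos_sub_eq_mul hac (cos_half_pos hθ).ne']
  exact mul_ne_zero (mul_ne_zero (mul_ne_zero (two_sub_ne_zero_of_mul_self_mul_eq hac)
    (pow_ne_zero 2 hcos)) (one_add_mul_ofReal_ne_zero ha _)) (one_sub_mul_ofReal_ne_zero ha _)

theorem hasDerivAt_log_tan_half {a c : ℂ} (ha : a.im ≠ 0) (hac : a * a * (2 - c) = 2 + c)
    {θ : ℝ} (hθ : θ ∈ Ioo (-π) π) :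
    HasDerivAt (fun θ : ℝ => Complex.log ((1 + a * tan (θ / 2)) / (1 - a * tan (θ / 2))))
      ((2 - c) * a * (2 * (cos θ : ℂ) - c)⁻¹) θ := by
  have hcos := cos_half_pos hθ
  have hD := one_sub_mul_ofReal_ne_zero ha (tan (θ / 2))
  have hslit : (1 + a * tan (θ / 2)) / (1 - a * tan (θ / 2)) ∈ Complex.slitPlane := by
    rcases eq_or_ne (tan (θ / 2)) 0 with ht | ht
    · simp [ht]
    · refine Or.inr ?_
      simpa using im_add_div_sub_ne_zero one_ne_zero (β := a * tan (θ / 2)) (by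
        simpa only [Complex.mul_im, Complex.ofReal_re, Complex.ofReal_im, mul_zero, zero_add]
          using mul_ne_zero ha ht)
  have htan : HasDerivAt (fun θ : ℝ => (tan (θ / 2) : ℂ)) ((cos (θ / 2) : ℂ)⁻¹ ^ 2 / 2) θ := by
    refine (((hasDerivAt_tan hcos.ne').comp θ
      ((hasDerivAt_id θ).div_const 2)).ofReal_comp).congr_deriv ?_
    push_cast; ring
  have hquot := ((htan.const_mul a).const_add 1).div ((htan.const_mul a).const_sub 1) hD
  refine ((Complex.hasDerivAt_log hslit).comp θ hquot).congr_deriv ?_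
  rw [two_cos_sub_eq_mul hac hcos.ne']
  have h2c := two_sub_ne_zero_of_mul_self_mul_eq hac
  field_simp
  ring

theorem mul_integral_inv_two_cos_sub_zero_pi_div_two {a c : ℂ} (ha : a.im ≠ 0)
    (hac : a * a * (2 - c) = 2 + c) :
    (2 - c) * a * ∫ θ in (0 : ℝ)..π / 2, (2 * (cos θ : ℂ) - c)⁻¹
      = Complex.log ((1 + a) / (1 - a)) := by
  have hsub : uIcc 0 (π / 2) ⊆ Ioo (-π) π := by
    rw [uIcc_of_le (by positivity)]
    exact Icc_subset_Ioo (by linarith [pi_pos]) (by linarith [pi_pos])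
  have hcont : ContinuousOn (fun θ : ℝ => (2 * (cos θ : ℂ) - c)⁻¹) (uIcc 0 (π / 2)) :=
    ContinuousOn.inv₀ (by fun_prop) fun θ hθ => two_cos_sub_ne_zero ha hac (hsub hθ)
  rw [← integral_const_mul, integral_eq_sub_of_hasDerivAt
    (fun θ hθ => hasDerivAt_log_tan_half ha hac (hsub hθ))
    (continuousOn_const.mul hcont).intervalIntegrable]
  simp [show π / 2 / 2 = π / 4 by ring]

theorem integral_comp_cos_eq_add_comp_neg_cos {E : Type*} [NormedAddCommGroup E]
    [NormedSpace ℝ E] [CompleteSpace E] {f : ℝ → E} (hf : Continuous f) :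
    ∫ θ in (0 : ℝ)..π, f (cos θ)
      = (∫ θ in (0 : ℝ)..π / 2, f (cos θ)) + ∫ θ in (0 : ℝ)..π / 2, f (-cos θ) := by
  have hint : ∀ a b : ℝ, IntervalIntegrable (fun θ => f (cos θ)) MeasureTheory.volume a b :=
    fun a b => (hf.comp continuous_cos).intervalIntegrable a b
  rw [← integral_add_adjacent_intervals (hint 0 (π / 2)) (hint (π / 2) π)]
  congr 1
  simpa [cos_pi_sub, show π - π / 2 = π / 2 by ring] using
    (integral_comp_sub_left (fun θ => f (cos θ)) π (a := 0) (b := π / 2)).symm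

theorem exists_im_ne_zero_mul_self_mul_eq {c : ℂ} (hc : c.im ≠ 0) :
    ∃ a : ℂ, a.im ≠ 0 ∧ a * a * (2 - c) = 2 + c := by
  have h2c : (2 : ℂ) - c ≠ 0 := fun h => hc (by simpa using congrArg Complex.im h)
  obtain ⟨a, ha2⟩ := IsAlgClosed.exists_pow_nat_eq ((2 + c) / (2 - c)) two_pos
  refine ⟨a, fun h => ?_, by rw [← sq, ha2, div_mul_cancel₀ _ h2c]⟩
  apply im_add_div_sub_ne_zero (r := 2) two_ne_zero hc
  push_cast
  rw [← ha2]
  simp [sq, Complex.mul_im, h]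

theorem mul_integral_inv_two_cos_sub_zero_pi {a c : ℂ} (hc : c.im ≠ 0) (ha : a.im ≠ 0)
    (hac : a * a * (2 - c) = 2 + c) :
    (2 - c) * a * ∫ θ in (0 : ℝ)..π, (2 * (cos θ : ℂ) - c)⁻¹
      = Complex.log ((1 + a) / (1 - a)) - Complex.log (-((1 + a) / (1 - a))) := by
  have ha0 : a ≠ 0 := fun h => ha (by simp [h])
  have ha' : a⁻¹.im ≠ 0 := by simpa [Complex.inv_im, ha, Complex.normSq_eq_zero] using ha0
  have hac' : a⁻¹ * a⁻¹ * (2 - -c) = 2 + -c := by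
    field_simp
    linear_combination -hac
  have hscale : (2 - -c) * a⁻¹ = (2 - c) * a := by
    field_simp
    linear_combination -hac
  have hQ : (1 + a⁻¹) / (1 - a⁻¹) = -((1 + a) / (1 - a)) := by
    rw [← mul_div_mul_left _ _ ha0, mul_add, mul_sub, mul_inv_cancel₀ ha0, mul_one,
      ← neg_sub 1 a, div_neg, add_comm]
  have hcont : Continuous fun x : ℝ => (2 * (x : ℂ) - c)⁻¹ :=
    Continuous.inv₀ (by fun_prop) fun x h => hc (by simpa using congrArg Complex.im h)
  have hreflect : ∫ θ in (0 : ℝ)..π / 2, (2 * ((-cos θ : ℝ) : ℂ) - c)⁻¹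
      = -∫ θ in (0 : ℝ)..π / 2, (2 * (cos θ : ℂ) - -c)⁻¹ := by
    rw [← integral_neg]
    congr 1
    ext θ
    rw [← inv_neg]
    push_cast
    ring_nf
  have hK := mul_integral_inv_two_cos_sub_zero_pi_div_two ha hac
  have hK' := mul_integral_inv_two_cos_sub_zero_pi_div_two ha' hac'
  rw [hscale, hQ] at hK'
  rw [integral_comp_cos_eq_add_comp_neg_cos hcont, hreflect]
  linear_combination hK - hK'

theorem sq_integral_inv_two_cos_sub {c : ℂ} (hc : c.im ≠ 0) :
    (4 - c ^ 2) * (∫ θ in (0 : ℝ)..π, (2 * (cos θ : ℂ) - c)⁻¹) ^ 2 = -π ^ 2 := by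
  obtain ⟨a, ha, hac⟩ := exists_im_ne_zero_mul_self_mul_eq hc
  have hJ := mul_integral_inv_two_cos_sub_zero_pi hc ha hac
  have hL := sq_log_sub_log_neg (im_add_div_sub_ne_zero (r := 1) one_ne_zero ha)
  push_cast at hL
  set J := ∫ θ in (0 : ℝ)..π, (2 * (cos θ : ℂ) - c)⁻¹
  set L := Complex.log ((1 + a) / (1 - a)) - Complex.log (-((1 + a) / (1 - a)))
  linear_combination ((2 - c) * a * J + L) * hJ + hL - (2 - c) * J ^ 2 * hac

/-- the Stieltjes transform of the semicircle density satisfies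
`1 + z m_sc(z) + m_sc(z)² = 0` on the upper half-plane. -/
theorem stmt_3 (z : ℂ) (hz : 0 < z.im)
    (msc : ℂ)
    (hmsc : msc = ∫ x in (-2 : ℝ)..2,
      ((Real.sqrt (max (4 - x ^ 2) 0) / (2 * Real.pi) : ℝ) : ℂ) / ((x : ℂ) - z)) :
    1 + z * msc + msc ^ 2 = 0 := by
  have hm := two_pi_mul_integral_semicircle_div_sub hz.ne'
  have hJ := sq_integral_inv_two_cos_sub hz.ne'
  rw [← hmsc] at hm
  set J := ∫ θ in (0 : ℝ)..π, (2 * (cos θ : ℂ) - z)⁻¹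
  have h : (4 * π ^ 2 : ℂ) * (1 + z * msc + msc ^ 2) = 0 := by
    linear_combination (2 * π * msc + π * z + (4 - z ^ 2) * J) * hm + (4 - z ^ 2) * hJ
  exact (mul_eq_zero.1 h).resolve_left (by exact_mod_cast (by positivity : (4 * π ^ 2 : ℝ) ≠ 0))
end

section
/- Switching invariance: let ℙ be the uniform measure on d-regular graphs on N vertices and let i,j,k,ℓ,m be distinct indices not in a given index set (all distinct). Then for any function F of the adjacency matrix, 𝔼[χᵢₖ^{mℓ}(A)·F(A)] = 𝔼[χᵢₘ^{kℓ}(A)·F(A + ξᵢₖ^{mℓ})], where χᵢⱼᵏˡ(A) = AᵢⱼA_{kℓ}(1-Aᵢₖ)(1-Aⱼₗ) and ξ is the switching matrix. -/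
open Finset

noncomputable def toMat (N : ℕ) (B : Fin N → Fin N → Bool) : Matrix (Fin N) (Fin N) ℝ :=
  Matrix.of fun i j => if B i j then 1 else 0

/-!
Toggling the four entries `ik, ml, im, kl` (and their transposes) of a 0-1 array is an
involution which exchanges the arrays switchable along `(i, k, m, l)` with those switchable
along `(i, m, k, l)`.
On the latter it acts on adjacency matrices as `A ↦ A + ξ`; since `ξ` is symmetric with zero
diagonal and zero row sums, it preserves `d`-regularity. Reindexing the sum by this involution
turns one side into the other.
-/

namespace Switching

section

variable {V : Type*} [DecidableEq V]

def toggle (E : Finset (Sym2 V)) (B : V → V → Bool) : V → V → Bool :=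
  fun x y => if s(x, y) ∈ E then !B x y else B x y

theorem toggle_apply_of_mem {E : Finset (Sym2 V)} {x y : V} (h : s(x, y) ∈ E)
    (B : V → V → Bool) : toggle E B x y = !B x y := if_pos h

theorem toggle_apply_of_notMem {E : Finset (Sym2 V)} {x y : V} (h : s(x, y) ∉ E)
    (B : V → V → Bool) : toggle E B x y = B x y := if_neg h

theorem toggle_toggle (E : Finset (Sym2 V)) (B : V → V → Bool) :
    toggle E (toggle E B) = B := by
  funext x y
  by_cases h : s(x, y) ∈ E <;> simp [toggle, h]

def Switchable (B : V → V → Bool) (a b c e : V) : Prop :=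
  B a b = true ∧ B c e = true ∧ B a c = false ∧ B b e = false

instance (B : V → V → Bool) (a b c e : V) : Decidable (Switchable B a b c e) :=
  inferInstanceAs (Decidable (_ ∧ _))

def switchEdges (a b c e : V) : Finset (Sym2 V) := {s(a, b), s(c, e), s(a, c), s(b, e)}

theorem switchEdges_comm (a b c e : V) : switchEdges a c b e = switchEdges a b c e := by
  ext; simp only [switchEdges, mem_insert, mem_singleton]; tauto

theorem Switchable.toggle {B : V → V → Bool} {a b c e : V} (h : Switchable B a b c e) :
    Switchable (toggle (switchEdges a b c e) B) a c b e := by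
  obtain ⟨hab, hce, hac, hbe⟩ := h
  simp [Switchable, Switching.toggle, switchEdges, hab, hce, hac, hbe]

def edgeMat (a b : V) : Matrix V V ℝ :=
  Matrix.of fun x y =>
    (if a = x ∧ b = y then (1 : ℝ) else 0) + (if b = x ∧ a = y then (1 : ℝ) else 0)

theorem edgeMat_apply_of_ne {a b : V} (hab : a ≠ b) (x y : V) :
    edgeMat a b x y = if s(x, y) = s(a, b) then 1 else 0 := by
  by_cases h1 : a = x ∧ b = y
  · obtain ⟨rfl, rfl⟩ := h1; simp [edgeMat, hab]
  by_cases h2 : b = x ∧ a = y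
  · obtain ⟨rfl, rfl⟩ := h2; simp [edgeMat, hab, hab.symm, Sym2.eq_swap]
  simp only [edgeMat, Matrix.of_apply, if_neg h1, if_neg h2, Sym2.eq_iff]
  grind

theorem edgeMat_apply_self {a b : V} (hab : a ≠ b) (x : V) : edgeMat a b x x = 0 := by
  have h₁ : ¬(a = x ∧ b = x) := fun h => hab (h.1.trans h.2.symm)
  have h₂ : ¬(b = x ∧ a = x) := fun h => hab (h.2.trans h.1.symm)
  simp [edgeMat, h₁, h₂]

theorem edgeMat_rowSum [Fintype V] (a b x : V) :
    ∑ y, edgeMat a b x y = (if a = x then 1 else 0) + (if b = x then 1 else 0) := by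
  by_cases ha : a = x <;> by_cases hb : b = x <;> simp [edgeMat, sum_add_distrib, ha, hb]

/-- The paper's `ξ_{ac}^{be}`: it removes the edges `ab, ce` and adds `ac, be`. -/
def switchMat (a b c e : V) : Matrix V V ℝ :=
  edgeMat a c + edgeMat b e - edgeMat a b - edgeMat c e

theorem switchMat_rowSum [Fintype V] (a b c e x : V) : ∑ y, switchMat a b c e x y = 0 := by
  simp only [switchMat, Matrix.sub_apply, Matrix.add_apply, sum_sub_distrib, sum_add_distrib,
    edgeMat_rowSum]
  ring

theorem switchMat_isSymm (a b c e : V) : (switchMat a b c e).IsSymm := by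
  have h : ∀ u v : V, (edgeMat u v).IsSymm := fun u v =>
    Matrix.IsSymm.ext fun x y => by simp only [edgeMat, Matrix.of_apply, and_comm, add_comm]
  exact (((h a c).add (h b e)).sub (h a b)).sub (h c e)

theorem switchMat_apply_self {a b c e : V} (hac : a ≠ c) (hbe : b ≠ e) (hab : a ≠ b)
    (hce : c ≠ e) (x : V) : switchMat a b c e x x = 0 := by
  simp [switchMat, edgeMat_apply_self, hac, hbe, hab, hce]

end

def IsRegularAdj {V : Type*} [Fintype V] (d : ℕ) (A : Matrix V V ℝ) : Prop :=
  (∀ x y, A x y = A y x) ∧ (∀ x y, A x y = 0 ∨ A x y = 1) ∧ (∀ x, A x x = 0) ∧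
    ∀ x, ∑ y, A x y = d

theorem IsRegularAdj.add {V : Type*} [Fintype V] {d : ℕ} {A M : Matrix V V ℝ}
    (hA : IsRegularAdj d A) (hM : M.IsSymm) (hMdiag : ∀ x, M x x = 0)
    (hMrow : ∀ x, ∑ y, M x y = 0)
    (h01 : ∀ x y, (A + M) x y = 0 ∨ (A + M) x y = 1) : IsRegularAdj d (A + M) := by
  obtain ⟨hAs, -, hAdiag, hArow⟩ := hA
  refine ⟨fun x y => ?_, h01, fun x => ?_, fun x => ?_⟩
  · simp only [Matrix.add_apply, hAs x y, hM.apply y x]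
  · simp [hAdiag, hMdiag]
  · simp [sum_add_distrib, hArow, hMrow]

theorem toMat_apply_eq_zero_or_one (N : ℕ) (B : Fin N → Fin N → Bool) (x y : Fin N) :
    toMat N B x y = 0 ∨ toMat N B x y = 1 := by
  cases h : B x y <;> simp [toMat, h]

theorem symm_of_toMat_symm {N : ℕ} {B : Fin N → Fin N → Bool}
    (h : ∀ x y, toMat N B x y = toMat N B y x) (x y : Fin N) : B x y = B y x := by
  have := h x y
  cases hx : B x y <;> cases hy : B y x <;> simp [toMat, hx, hy] at this ⊢

theorem toMat_toggle_switchEdges {N : ℕ} {B : Fin N → Fin N → Bool} {a b c e : Fin N}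
    (hd : [a, b, c, e].Nodup) (hB : ∀ x y, B x y = B y x) (hs : Switchable B a b c e) :
    toMat N (toggle (switchEdges a b c e) B) = toMat N B + switchMat a b c e := by
  simp only [List.nodup_cons, List.mem_cons, List.not_mem_nil, or_false, not_or] at hd
  obtain ⟨⟨hab, hac, hae⟩, ⟨hbc, hbe⟩, hce, -⟩ := hd
  have hB' : ∀ {x y u v}, s(x, y) = s(u, v) → B x y = B u v := by
    intro x y u v h
    rcases Sym2.eq_iff.1 h with ⟨rfl, rfl⟩ | ⟨rfl, rfl⟩
    · rfl
    · exact hB _ _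
  obtain ⟨h1, h2, h3, h4⟩ := hs
  ext x y
  simp only [toMat, switchMat, Matrix.of_apply, Matrix.add_apply, Matrix.sub_apply,
    edgeMat_apply_of_ne hab, edgeMat_apply_of_ne hac, edgeMat_apply_of_ne hbe,
    edgeMat_apply_of_ne hce]
  by_cases hE : s(x, y) ∈ switchEdges a b c e
  · rw [toggle_apply_of_mem hE]
    simp only [switchEdges, mem_insert, mem_singleton] at hE
    rcases hE with h | h | h | h <;>
      simp [h, hB' h, h1, h2, h3, h4, hab, hac, hae, hbc, hbe, hce, Ne.symm hab, Ne.symm hac,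
        Ne.symm hae, Ne.symm hbc, Ne.symm hbe, Ne.symm hce]
  · rw [toggle_apply_of_notMem hE]
    simp only [switchEdges, mem_insert, mem_singleton, not_or] at hE
    simp [hE]

theorem IsRegularAdj.toggle_switchEdges {N d : ℕ} {B : Fin N → Fin N → Bool} {a b c e : Fin N}
    (hd : [a, b, c, e].Nodup) (hA : IsRegularAdj d (toMat N B)) (hs : Switchable B a b c e) :
    IsRegularAdj d (toMat N (toggle (switchEdges a b c e) B)) := by
  have hB := symm_of_toMat_symm hA.1
  have hsw := toMat_toggle_switchEdges hd hB hs
  simp only [List.nodup_cons, List.mem_cons, List.not_mem_nil, or_false, not_or] at hd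
  obtain ⟨⟨hab, hac, -⟩, ⟨-, hbe⟩, hce, -⟩ := hd
  rw [hsw]
  refine hA.add (switchMat_isSymm a b c e) (switchMat_apply_self hac hbe hab hce)
    (switchMat_rowSum a b c e) ?_
  rw [← hsw]
  exact toMat_apply_eq_zero_or_one N _

theorem toMat_chi {N : ℕ} (B : Fin N → Fin N → Bool) (a b c e : Fin N) :
    toMat N B a b * toMat N B c e * (1 - toMat N B a c) * (1 - toMat N B b e) =
      if Switchable B a b c e then 1 else 0 := by
  cases h₁ : B a b <;> cases h₂ : B c e <;> cases h₃ : B a c <;> cases h₄ : B b e <;>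
    simp [toMat, Switchable, h₁, h₂, h₃, h₄]

end Switching

open Switching

open scoped Classical in
/-- switching invariance of the uniform measure on `d`-regular graphs:
`𝔼[χ_{ik}^{mℓ}(A) F(A)] = 𝔼[χ_{im}^{kℓ}(A) F(A + ξ_{ik}^{mℓ})]` for distinct indices. -/
theorem stmt_7 (N d : ℕ)
    (isReg : Matrix (Fin N) (Fin N) ℝ → Prop)
    (hisReg : ∀ A, isReg A ↔ ((∀ x y, A x y = A y x) ∧ (∀ x y, A x y = 0 ∨ A x y = 1) ∧
      (∀ x, A x x = 0) ∧ ∀ x, ∑ y, A x y = d))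
    (chi : Matrix (Fin N) (Fin N) ℝ → Fin N → Fin N → Fin N → Fin N → ℝ)
    (hchi : ∀ A a b c e, chi A a b c e = A a b * A c e * (1 - A a c) * (1 - A b e))
    (Δ : Fin N → Fin N → Matrix (Fin N) (Fin N) ℝ)
    (hΔ : ∀ a b, Δ a b = Matrix.of fun x y =>
      (if a = x ∧ b = y then (1 : ℝ) else 0) + (if b = x ∧ a = y then (1 : ℝ) else 0))
    (F : Matrix (Fin N) (Fin N) ℝ → ℝ)
    (i j k l m : Fin N)
    (hdist : List.Pairwise (· ≠ ·) [i, j, k, l, m]) :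
    ((Finset.univ.filter fun B : Fin N → Fin N → Bool => isReg (toMat N B)).card : ℝ)⁻¹ *
        ∑ B ∈ Finset.univ.filter (fun B : Fin N → Fin N → Bool => isReg (toMat N B)),
          chi (toMat N B) i k m l * F (toMat N B)
      = ((Finset.univ.filter fun B : Fin N → Fin N → Bool => isReg (toMat N B)).card : ℝ)⁻¹ *
        ∑ B ∈ Finset.univ.filter (fun B : Fin N → Fin N → Bool => isReg (toMat N B)),
          chi (toMat N B) i m k l *
            F (toMat N B + (Δ i k + Δ m l - Δ i m - Δ k l)) := by
  obtain rfl : isReg = IsRegularAdj d := funext fun A => propext (hisReg A)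
  obtain rfl : Δ = edgeMat := funext₂ hΔ
  have hd₁ : [i, m, k, l].Nodup := by grind
  have hd₂ : [i, k, m, l].Nodup := by grind
  simp only [hchi, toMat_chi, ite_mul, one_mul, zero_mul, ← sum_filter, filter_filter]
  congr 1
  symm
  refine sum_nbij' (toggle (switchEdges i m k l)) (toggle (switchEdges i m k l)) ?_ ?_
    (fun B _ => toggle_toggle _ B) (fun B _ => toggle_toggle _ B) ?_
  · intro B hB
    simp only [mem_filter, mem_univ, true_and] at hB ⊢
    exact ⟨hB.1.toggle_switchEdges hd₁ hB.2, hB.2.toggle⟩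
  · intro B hB
    simp only [mem_filter, mem_univ, true_and] at hB ⊢
    rw [← switchEdges_comm]
    exact ⟨hB.1.toggle_switchEdges hd₂ hB.2, hB.2.toggle⟩
  · intro B hB
    simp only [mem_filter, mem_univ, true_and] at hB
    rw [toMat_toggle_switchEdges hd₁ (symm_of_toMat_symm hB.1.1) hB.2]
    rfl
end

section
/- Self-consistent equation after free convolution: suppose m₀: ℂ₊ → ℂ₊ satisfies 1 + z·m₀(z) + m₀(z)² + Q(m₀(z)) = 0, where Q is a polynomial. For t ≥ 0 define ξ(z;t) = e^{-t/2}z − e^{t/2}(1 − e^{-t})m₀(z) and m_t(ξ(z;t)) = e^{t/2}m₀(z). Then m_t satisfies 1 + w·m_t(w) + m_t(w)² + Q(e^{-t/2}m_t(w)) = 0 at w = ξ(z;t). -/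
/-- self-consistent equation after free convolution: if
`1 + z m₀(z) + m₀(z)² + Q(m₀(z)) = 0` and `m_t(ξ(z;t)) = e^{t/2} m₀(z)` with
`ξ(z;t) = e^{-t/2}z − e^{t/2}(1−e^{-t})m₀(z)`, then
`1 + w m_t(w) + m_t(w)² + Q(e^{-t/2}m_t(w)) = 0` at `w = ξ(z;t)`. -/
theorem stmt_14 (Q : Polynomial ℂ) (m₀ : ℂ → ℂ)
    (hm₀ : ∀ z, 0 < z.im → 1 + z * m₀ z + m₀ z ^ 2 + Q.eval (m₀ z) = 0)
    (t : ℝ) (ht : 0 ≤ t)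
    (ξ : ℂ → ℂ)
    (hξ : ∀ z, ξ z = (Real.exp (-t / 2) : ℂ) * z -
      (Real.exp (t / 2) : ℂ) * (1 - (Real.exp (-t) : ℂ)) * m₀ z)
    (mt : ℂ → ℂ)
    (hflow : ∀ z, 0 < z.im → mt (ξ z) = (Real.exp (t / 2) : ℂ) * m₀ z) :
    ∀ z, 0 < z.im →
      1 + ξ z * mt (ξ z) + mt (ξ z) ^ 2 +
        Q.eval ((Real.exp (-t / 2) : ℂ) * mt (ξ z)) = 0 := by
  intro z hz
  have h1r : Real.exp (-t / 2) * Real.exp (t / 2) = 1 := by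
    rw [← Real.exp_add]; ring_nf; exact Real.exp_zero
  have h2r : Real.exp (t / 2) * Real.exp (t / 2) * Real.exp (-t) = 1 := by
    rw [← Real.exp_add, ← Real.exp_add]; ring_nf; exact Real.exp_zero
  have h1 : (Real.exp (-t / 2) : ℂ) * (Real.exp (t / 2) : ℂ) = 1 := by exact_mod_cast congrArg Complex.ofReal h1r
  have h2 : (Real.exp (t / 2) : ℂ) * (Real.exp (t / 2) : ℂ) * (Real.exp (-t) : ℂ) = 1 := by exact_mod_cast congrArg Complex.ofReal h2r
  rw [hflow z hz, hξ z]
  have key : (Real.exp (-t / 2) : ℂ) * ((Real.exp (t / 2) : ℂ) * m₀ z) = m₀ z := by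
    rw [← mul_assoc, h1, one_mul]
  rw [key]
  have := hm₀ z hz
  linear_combination this + z * m₀ z * h1 + m₀ z ^ 2 * h2
end

section
/- Edge equation under the free convolution flow: let m_d be the Stieltjes transform of a compactly supported probability measure, t > 0, and z₊ ∈ ℝ outside the support satisfy m_d'(z₊) = 1/(e^t − 1). Define E₊(t) = e^{-t/2}z₊ − e^{t/2}(1 − e^{-t})m_d(z₊). Then differentiating in t (with z₊ = z₊(t) smooth and satisfying the edge equation for each t), ∂_t E₊(t) = −(1/2)(e^{-t/2}z₊(t) + (e^{t/2} + e^{-t/2})m_d(z₊(t))). -/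
/-!
Away from the support of `ρ`, the integrand `ρ y / (y - x)` and its `x`-derivative
`ρ y / (y - x)²` are dominated by a multiple of `|ρ|`, so `m_d` is differentiable at `z₊(t)`.
Differentiating `E₊` by the chain rule, the coefficient of `∂_t z₊` is
`e^{-t/2} - e^{t/2}(1 - e^{-t}) m_d'(z₊)`, which vanishes by the edge equation
`m_d'(z₊) = 1/(e^t - 1)`; what remains is the derivative of the explicit exponential factors.
-/

open MeasureTheory Metric Real

lemma norm_div_pow_le_of_le_abs {r a δ : ℝ} (n : ℕ) (hδ : 0 < δ) (ha : δ ≤ |a|) :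
    ‖r / a ^ n‖ ≤ ‖r‖ / δ ^ n := by
  rw [norm_div, norm_pow, Real.norm_eq_abs a]
  gcongr

lemma exists_ball_le_abs_sub_of_notMem_tsupport {ρ : ℝ → ℝ} {x₀ : ℝ} (hx₀ : x₀ ∉ tsupport ρ) :
    ∃ δ > 0, ∀ x ∈ ball x₀ δ, ∀ y, ρ y ≠ 0 → δ ≤ |y - x| := by
  obtain ⟨ε, hε, hball⟩ := Metric.isOpen_iff.1 (isClosed_tsupport ρ).isOpen_compl x₀ hx₀
  refine ⟨ε / 2, half_pos hε, fun x hx y hy => ?_⟩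
  have hyx₀ : ε ≤ dist y x₀ := not_lt.1 fun h => hball h (subset_tsupport ρ hy)
  have := dist_triangle y x x₀
  rw [mem_ball] at hx
  rw [← Real.dist_eq]
  linarith

theorem hasDerivAt_integral_div_sub {μ : Measure ℝ} {ρ : ℝ → ℝ} (hρ : Integrable ρ μ) {x₀ : ℝ}
    (hx₀ : x₀ ∉ tsupport ρ) :
    HasDerivAt (fun x => ∫ y, ρ y / (y - x) ∂μ) (∫ y, ρ y / (y - x₀) ^ 2 ∂μ) x₀ := by
  obtain ⟨δ, hδ, hsep⟩ := exists_ball_le_abs_sub_of_notMem_tsupport hx₀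
  have hbound : ∀ n : ℕ, ∀ x ∈ ball x₀ δ, ∀ y, ‖ρ y / (y - x) ^ n‖ ≤ ‖ρ y‖ / δ ^ n := by
    intro n x hx y
    by_cases hy : ρ y = 0
    · simp [hy]
    · exact norm_div_pow_le_of_le_abs n hδ (hsep x hx y hy)
  have hmeas : ∀ (n : ℕ) (x : ℝ), AEStronglyMeasurable (fun y => ρ y / (y - x) ^ n) μ :=
    fun n x => by simp only [div_eq_mul_inv]; exact hρ.1.fun_mul (by fun_prop)
  have hint : Integrable (fun y => ρ y / (y - x₀)) μ :=
    (hρ.norm.div_const δ).mono' (by simpa using hmeas 1 x₀)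
      (.of_forall fun y => by simpa using hbound 1 x₀ (mem_ball_self hδ) y)
  refine (hasDerivAt_integral_of_dominated_loc_of_deriv_le (ball_mem_nhds x₀ hδ)
    (.of_forall fun x => by simpa using hmeas 1 x) hint (hmeas 2 x₀)
    (.of_forall fun y x hx => hbound 2 x hx y) (hρ.norm.div_const _)
    (.of_forall fun y x hx => ?_)).2
  by_cases hy : ρ y = 0
  · simpa [hy] using hasDerivAt_const x (0 : ℝ)
  · have hne : y - x ≠ 0 := abs_pos.1 (hδ.trans_le (hsep x hx y hy))
    simpa [div_eq_mul_inv, ← sq] using ((hasDerivAt_id x).const_sub y).inv hne |>.const_mul (ρ y)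

lemma exp_half_mul_one_sub_exp_neg_div {t : ℝ} (ht : t ≠ 0) :
    exp (t / 2) * (1 - exp (-t)) * (1 / (exp t - 1)) = exp (-t / 2) := by
  have hne : exp t - 1 ≠ 0 := sub_ne_zero.2 (by simpa using ht)
  have hsq : exp t = exp (t / 2) ^ 2 := by rw [← exp_nat_mul]; ring_nf
  rw [hsq] at hne
  rw [neg_div, exp_neg, exp_neg, hsq]
  field_simp

theorem hasDerivAt_edge {z m : ℝ → ℝ} {z' t : ℝ} (ht : t ≠ 0) (hz : HasDerivAt z z' t)
    (hm : HasDerivAt m (1 / (exp t - 1)) (z t)) :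
    HasDerivAt (fun s => exp (-s / 2) * z s - exp (s / 2) * (1 - exp (-s)) * m (z s))
      (-(1 / 2) * (exp (-t / 2) * z t + (exp (t / 2) + exp (-t / 2)) * m (z t))) t := by
  have h1 : HasDerivAt (fun s => exp (-s / 2)) (exp (-t / 2) * (-1 / 2)) t :=
    ((hasDerivAt_id t).neg.div_const 2).exp
  have h2 : HasDerivAt (fun s => exp (s / 2)) (exp (t / 2) * (1 / 2)) t :=
    ((hasDerivAt_id t).div_const 2).exp
  have h3 : HasDerivAt (fun s => 1 - exp (-s)) (-(exp (-t) * -1)) t :=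
    (hasDerivAt_id t).neg.exp.const_sub 1
  refine ((h1.mul hz).sub ((h2.mul h3).mul (hm.comp t hz))).congr_deriv ?_
  have hexp : exp (t / 2) * exp (-t) = exp (-t / 2) := by rw [← exp_add]; ring_nf
  simp only [Pi.mul_apply, Function.comp_apply]
  linear_combination (-z') * exp_half_mul_one_sub_exp_neg_div ht - (1 / 2) * m (z t) * hexp

theorem stmt_18_general (ρ : ℝ → ℝ)
    (hρint : Integrable ρ)
    (md : ℝ → ℝ) (hmd : ∀ x, md x = ∫ y, ρ y / (y - x))
    (zp : ℝ → ℝ) (hzp : Differentiable ℝ zp)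
    (hout : ∀ t > 0, ∀ y ∈ tsupport ρ, y < zp t)
    (hedge : ∀ t > 0, deriv md (zp t) = 1 / (Real.exp t - 1))
    (Ep : ℝ → ℝ)
    (hEp : ∀ t, Ep t = Real.exp (-t / 2) * zp t -
      Real.exp (t / 2) * (1 - Real.exp (-t)) * md (zp t)) :
    ∀ t > 0, deriv Ep t
      = -(1 / 2) * (Real.exp (-t / 2) * zp t +
          (Real.exp (t / 2) + Real.exp (-t / 2)) * md (zp t)) := by
  intro t ht
  have hzp_out : zp t ∉ tsupport ρ := fun h => (hout t ht _ h).false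
  have hmd_diff : DifferentiableAt ℝ md (zp t) := by
    rw [funext hmd]
    exact (hasDerivAt_integral_div_sub hρint hzp_out).differentiableAt
  have hmd_deriv : HasDerivAt md (1 / (exp t - 1)) (zp t) :=
    hedge t ht ▸ hmd_diff.hasDerivAt
  rw [funext hEp]
  exact (hasDerivAt_edge ht.ne' (hzp t).hasDerivAt hmd_deriv).deriv

/-- edge equation under the free convolution flow: if
`m_d'(z₊(t)) = 1/(e^t − 1)` and
`E₊(t) = e^{-t/2}z₊(t) − e^{t/2}(1−e^{-t})m_d(z₊(t))`, then
`∂_t E₊(t) = −(1/2)(e^{-t/2}z₊(t) + (e^{t/2}+e^{-t/2})m_d(z₊(t)))`. -/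
theorem stmt_18 (ρ : ℝ → ℝ)
    (hρint : Integrable ρ) (hρ0 : ∀ x, 0 ≤ ρ x)
    (hρc : HasCompactSupport ρ) (hρ1 : ∫ x, ρ x = 1)
    (md : ℝ → ℝ) (hmd : ∀ x, md x = ∫ y, ρ y / (y - x))
    (zp : ℝ → ℝ) (hzp : Differentiable ℝ zp)
    (hout : ∀ t > 0, ∀ y ∈ tsupport ρ, y < zp t)
    (hedge : ∀ t > 0, deriv md (zp t) = 1 / (Real.exp t - 1))
    (Ep : ℝ → ℝ)
    (hEp : ∀ t, Ep t = Real.exp (-t / 2) * zp t -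
      Real.exp (t / 2) * (1 - Real.exp (-t)) * md (zp t)) :
    ∀ t > 0, deriv Ep t
      = -(1 / 2) * (Real.exp (-t / 2) * zp t +
          (Real.exp (t / 2) + Real.exp (-t / 2)) * md (zp t)) :=
  stmt_18_general ρ hρint md hmd zp hzp hout hedge Ep hEp
end
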